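/- Let n ≥ 1 and let F be an upset of a De Morgan lattice L. Then F is a complete prime n-filter on L if and only if there exists a homomorphism of De Morgan lattices h : L → (Fin n → Bool × Bool) such that (h x i).2 = true implies (h x i).1 = true for all x ∈ L and i : Fin n (i.e., h takes values in the subalgebra Pₙ of DMₙ), and F = {x : ∃ i, (h x i).1 = true}. -/

import Mathlib

/-- A De Morgan lattice: a distributive lattice with an antitone involution. -/
class DeMorgan (L : Type*) extends DistribLattice L where
  dneg : L → L
  dneg_dneg : ∀ x : L, dneg (dneg x) = x
  dneg_sup : ∀ x y : L, dneg (x ⊔ y) = dneg x ⊓ dneg y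

prefix:max "∼" => DeMorgan.dneg

section Defs

variable {α : Type*}

/-- An upward closed subset of a lattice. -/
def IsUpset [Lattice α] (F : Set α) : Prop :=
  ∀ ⦃x y : α⦄, x ∈ F → x ≤ y → y ∈ F

/-- A lattice filter: an upset closed under binary meets. -/
def IsLatFilter [Lattice α] (F : Set α) : Prop :=
  IsUpset F ∧ ∀ x y : α, x ∈ F → y ∈ F → x ⊓ y ∈ F

/-- An `n`-filter: an upset such that for every nonempty finite `Y`, if the meet of
every nonempty subset of `Y` of size at most `n` lies in `F`, then so does the meet of `Y`. -/
def IsNFilter [Lattice α] (n : ℕ) (F : Set α) : Prop :=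
  IsUpset F ∧ ∀ (Y : Finset α) (hY : Y.Nonempty),
    (∀ (X : Finset α) (hX : X.Nonempty), X ⊆ Y → X.card ≤ n → X.inf' hX id ∈ F) →
    Y.inf' hY id ∈ F

/-- A prime upset: `x ⊔ y ∈ F` implies `x ∈ F` or `y ∈ F`. -/
def IsPrimeUpset [Lattice α] (F : Set α) : Prop :=
  ∀ x y : α, x ⊔ y ∈ F → x ∈ F ∨ y ∈ F

/-- A downward closed subset of a lattice. -/
def IsDownset [Lattice α] (I : Set α) : Prop :=
  ∀ ⦃x y : α⦄, x ∈ I → y ≤ x → y ∈ I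

/-- A lattice ideal: a downset closed under binary joins. -/
def IsIdeal [Lattice α] (I : Set α) : Prop :=
  IsDownset I ∧ ∀ x y : α, x ∈ I → y ∈ I → x ⊔ y ∈ I

/-- An `n`-ideal: the order dual notion of an `n`-filter. -/
def IsNIdeal [Lattice α] (n : ℕ) (I : Set α) : Prop :=
  IsDownset I ∧ ∀ (Y : Finset α) (hY : Y.Nonempty),
    (∀ (X : Finset α) (hX : X.Nonempty), X ⊆ Y → X.card ≤ n → X.sup' hX id ∈ I) →
    Y.sup' hY id ∈ I

variable {L : Type*} [DeMorgan L]

/-- Almost complete upset: `x ∈ F` implies `x ⊓ (y ⊔ ∼y) ∈ F`. -/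
def AlmostComplete (F : Set L) : Prop := ∀ x ∈ F, ∀ y : L, x ⊓ (y ⊔ ∼y) ∈ F

/-- Complete upset: almost complete and nonempty. -/
def IsCompleteUpset (F : Set L) : Prop := AlmostComplete F ∧ F.Nonempty

/-- Almost consistent upset: `(x ⊓ ∼x) ⊔ y ∈ F` implies `y ∈ F`. -/
def AlmostConsistent (F : Set L) : Prop := ∀ x y : L, (x ⊓ ∼x) ⊔ y ∈ F → y ∈ F

/-- Consistent upset: almost consistent and not total. -/
def IsConsistentUpset (F : Set L) : Prop := AlmostConsistent F ∧ F ≠ Set.univ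

/-- Classical upset: complete and consistent. -/
def IsClassicalUpset (F : Set L) : Prop := IsCompleteUpset F ∧ IsConsistentUpset F

/-- Kalman upset. -/
def IsKalmanUpset (F : Set L) : Prop :=
  ∀ x y z u : L, ((x ⊓ ∼x) ⊓ z) ⊔ u ∈ F → ((y ⊔ ∼y) ⊓ z) ⊔ u ∈ F

/-- A homomorphism of De Morgan lattices. -/
def IsDMHom {L M : Type*} [DeMorgan L] [DeMorgan M] (h : L → M) : Prop :=
  (∀ x y : L, h (x ⊓ y) = h x ⊓ h y) ∧ (∀ x y : L, h (x ⊔ y) = h x ⊔ h y) ∧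
    ∀ x : L, h (∼x) = ∼(h x)

/-- The filter generated by all elements of the form `x ⊔ ∼x`. -/
def Fcomp (L : Type*) [DeMorgan L] : Set L :=
  {a | ∃ (s : Finset L) (hs : s.Nonempty), s.inf' hs (fun x => x ⊔ ∼x) ≤ a}

/-- The `n`-filter generated by a set. -/
def nFilterGen (n : ℕ) (U : Set L) : Set L :=
  ⋂₀ {F : Set L | IsNFilter n F ∧ U ⊆ F}

/-- `Comp U`. -/
def CompCl (U : Set L) : Set L := {x | ∃ a ∈ U, ∃ f ∈ Fcomp L, a ⊓ f ≤ x}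

/-- `Cons U`. -/
def ConsCl (U : Set L) : Set L := {x | ∃ f ∈ Fcomp L, ∼f ⊔ x ∈ U}

/-- A congruence of De Morgan lattices, as a binary relation. -/
def IsCongruence (θ : L → L → Prop) : Prop :=
  Equivalence θ ∧
  (∀ a b c d : L, θ a b → θ c d → θ (a ⊓ c) (b ⊓ d)) ∧
  (∀ a b c d : L, θ a b → θ c d → θ (a ⊔ c) (b ⊔ d)) ∧
  ∀ a b : L, θ a b → θ (∼a) (∼b)

end Defs

/-- The four-element De Morgan lattice `DM₁` on `Bool × Bool`. -/
instance : DeMorgan (Bool × Bool) :=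
  { (inferInstance : DistribLattice (Bool × Bool)) with
    dneg := fun p => (!p.2, !p.1)
    dneg_dneg := by decide
    dneg_sup := by decide }

/-- Powers of `DM₁`, with componentwise operations. -/
instance {ι : Type*} : DeMorgan (ι → Bool × Bool) :=
  { (inferInstance : DistribLattice (ι → Bool × Bool)) with
    dneg := fun f i => ∼(f i)
    dneg_dneg := fun f => funext fun i => DeMorgan.dneg_dneg (f i)
    dneg_sup := fun f g => funext fun i => DeMorgan.dneg_sup (f i) (g i) }


/-!
Let `F` be a prime upset of a distributive lattice. The filters maximal among those contained in
`F` are prime and cover `F`. If `F` is an `n`-filter there are at most `n` of them: from `n + 1` of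
them pick `a i` with pairwise meets outside `F`; any `n` of the joins `⨆ j ≠ i, a j` lie above a
common `a k`, so `⨅ i, ⨆ j ≠ i, a j ∈ F`, and peeling off two joinands by primality puts some
`a i ⊓ a j` with `i ≠ j` into `F`. When `F` is also complete, maximality forces every `y ⊔ ∼y`
into each of these prime filters `P`, and `x ↦ (x ∈ P, ∼x ∉ P)` is a homomorphism into `P₁`.
Conversely the coordinates of a homomorphism into `Pₙ` cut out `n` such prime filters, and a union
of `n` filters is an `n`-filter.
-/

section Filters

variable {α ι : Type*}

lemma Finset.exists_subset_image_erase_of_card_lt {β : Type*} [Fintype ι] [DecidableEq ι]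
    [DecidableEq β] {b : ι → β} {X : Finset β} (hX : X ⊆ Finset.univ.image b)
    (hcard : X.card < Fintype.card ι) : ∃ k, X ⊆ (Finset.univ.erase k).image b := by
  by_contra! h
  simp only [Finset.not_subset] at h
  choose x hxX hx using h
  refine hcard.not_ge (Finset.card_le_card_of_injOn x (fun k _ => hxX k) fun k _ l _ hkl => ?_)
  have hfiber (m : ι) (i : ι) (hi : b i = x m) : i = m := by
    by_contra him
    exact hx m (Finset.mem_image.mpr ⟨i, Finset.mem_erase.mpr ⟨him, Finset.mem_univ i⟩, hi⟩)
  obtain ⟨i, -, hi⟩ := Finset.mem_image.mp (hX (hxX k))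
  exact (hfiber k i hi).symm.trans (hfiber l i (hi.trans hkl))

lemma exists_surjective_fin_of_forall_not_injective {β : Type*} [Nonempty β] {n : ℕ}
    (h : ∀ f : Fin (n + 1) → β, ¬ Function.Injective f) :
    ∃ g : Fin n → β, Function.Surjective g := by
  have : Finite β := by
    by_contra hinf
    have : Infinite β := not_finite_iff_infinite.mp hinf
    exact h _ ((Fin.valEmbedding.trans (Infinite.natEmbedding β)).injective)
  have : Fintype β := Fintype.ofFinite β
  have hcard : Fintype.card β ≤ n := by
    by_contra! hlt
    obtain ⟨f⟩ := Function.Embedding.nonempty_of_card_le (α := Fin (n + 1)) (β := β) (by simpa)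
    exact h f f.injective
  obtain ⟨e⟩ := Function.Embedding.nonempty_of_card_le (α := β) (β := Fin n) (by simpa)
  exact ⟨Function.invFun e, Function.invFun_surjective e.injective⟩

section Lattice

variable [Lattice α] {F G : Set α}

lemma IsLatFilter.infClosed (hG : IsLatFilter G) : InfClosed G :=
  fun x hx y hy => hG.2 x y hx hy

lemma IsLatFilter.inf_mem_iff (hG : IsLatFilter G) {x y : α} : x ⊓ y ∈ G ↔ x ∈ G ∧ y ∈ G :=
  ⟨fun h => ⟨hG.1 h inf_le_left, hG.1 h inf_le_right⟩, fun h => hG.2 x y h.1 h.2⟩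

lemma IsPrimeUpset.sup_mem_iff (hG : IsPrimeUpset G) (hup : IsUpset G) {x y : α} :
    x ⊔ y ∈ G ↔ x ∈ G ∨ y ∈ G :=
  ⟨hG x y, fun h => h.elim (hup · le_sup_left) (hup · le_sup_right)⟩

lemma isLatFilter_Ici (x : α) : IsLatFilter (Set.Ici x) :=
  ⟨fun _ _ hy hyz => le_trans hy hyz, fun _ _ hy hz => le_inf hy hz⟩

lemma IsPrimeUpset.exists_mem_of_sup'_mem (hF : IsPrimeUpset F) {s : Finset ι}
    (hs : s.Nonempty) {g : ι → α} (h : s.sup' hs g ∈ F) : ∃ i ∈ s, g i ∈ F := by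
  induction hs using Finset.Nonempty.cons_induction with
  | singleton a => exact ⟨a, Finset.mem_singleton_self a, by simpa using h⟩
  | cons a s ha hs ih =>
    rw [Finset.sup'_cons hs] at h
    rcases hF _ _ h with h | h
    · exact ⟨a, Finset.mem_cons_self a s, h⟩
    · obtain ⟨i, hi, hgi⟩ := ih h
      exact ⟨i, Finset.mem_cons_of_mem hi, hgi⟩

lemma isNFilter_iUnion [Fintype ι] [Nonempty ι] {n : ℕ} (hcard : Fintype.card ι ≤ n)
    {P : ι → Set α} (hP : ∀ i, IsLatFilter (P i)) : IsNFilter n (⋃ i, P i) := by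
  classical
  refine ⟨fun x y hx hxy => ?_, fun Y hY hsub => ?_⟩
  · obtain ⟨i, hi⟩ := Set.mem_iUnion.mp hx
    exact Set.mem_iUnion_of_mem i ((hP i).1 hi hxy)
  obtain ⟨i, hi⟩ : ∃ i, ∀ y ∈ Y, y ∈ P i := by
    by_contra! h
    choose y hyY hyP using h
    have hXY : Finset.univ.image y ⊆ Y := Finset.image_subset_iff.mpr fun i _ => hyY i
    have hXcard : (Finset.univ.image y).card ≤ n :=
      Finset.card_image_le.trans (by simpa using hcard)
    obtain ⟨i, hi⟩ := Set.mem_iUnion.mp (hsub _ (Finset.univ_nonempty.image y) hXY hXcard)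
    exact hyP i ((hP i).1 hi (Finset.inf'_le id (Finset.mem_image_of_mem y (Finset.mem_univ i))))
  exact Set.mem_iUnion_of_mem i ((hP i).infClosed.finsetInf'_mem hY hi)

lemma isPrimeUpset_iUnion {P : ι → Set α} (hP : ∀ i, IsPrimeUpset (P i)) :
    IsPrimeUpset (⋃ i, P i) := by
  intro x y hxy
  obtain ⟨i, hi⟩ := Set.mem_iUnion.mp hxy
  exact (hP i x y hi).imp (Set.mem_iUnion_of_mem i) (Set.mem_iUnion_of_mem i)

lemma isLatFilter_setOf_eq_true {f : α → Bool} (hf : ∀ x y, f (x ⊓ y) = f x ⊓ f y) :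
    IsLatFilter {x | f x = true} := by
  refine ⟨fun x y hx hxy => ?_, fun x y hx hy => ?_⟩
  · have hfx := hf x y
    change f x = true at hx
    rw [inf_eq_left.mpr hxy, hx] at hfx
    simpa using hfx.symm
  · change f (x ⊓ y) = true
    rw [hf, show f x = true from hx, show f y = true from hy]
    rfl

lemma isPrimeUpset_setOf_eq_true {f : α → Bool} (hf : ∀ x y, f (x ⊔ y) = f x ⊔ f y) :
    IsPrimeUpset {x | f x = true} := by
  intro x y hxy
  simpa [hf] using hxy

def IsMaxFilterIn (F G : Set α) : Prop :=
  Maximal (fun G : Set α => IsLatFilter G ∧ G ⊆ F) G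

lemma exists_isMaxFilterIn_mem (hup : IsUpset F) {x : α} (hx : x ∈ F) :
    ∃ G, IsMaxFilterIn F G ∧ x ∈ G := by
  have hchain : ∀ c ⊆ {G | IsLatFilter G ∧ G ⊆ F}, IsChain (· ⊆ ·) c → c.Nonempty →
      ∃ ub ∈ {G | IsLatFilter G ∧ G ⊆ F}, ∀ G ∈ c, G ⊆ ub := by
    rintro c hcS hc -
    refine ⟨⋃₀ c, ⟨⟨?_, ?_⟩, Set.sUnion_subset fun G hG => (hcS hG).2⟩,
      fun G => Set.subset_sUnion_of_mem⟩
    · rintro y z ⟨G, hG, hy⟩ hyz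
      exact ⟨G, hG, (hcS hG).1.1 hy hyz⟩
    · rintro y z ⟨G, hG, hy⟩ ⟨G', hG', hz⟩
      rcases hc.total hG hG' with h | h
      · exact ⟨G', hG', (hcS hG').1.2 y z (h hy) hz⟩
      · exact ⟨G, hG, (hcS hG).1.2 y z hy (h hz)⟩
  obtain ⟨G, hxG, hG⟩ := zorn_subset_nonempty _ hchain (Set.Ici x)
    ⟨isLatFilter_Ici x, fun _ hy => hup hx hy⟩
  exact ⟨G, hG, hxG Set.self_mem_Ici⟩

lemma IsMaxFilterIn.nonempty (hG : IsMaxFilterIn F G) (hup : IsUpset F) (hF : F.Nonempty) :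
    G.Nonempty := by
  obtain ⟨x, hx⟩ := hF
  by_contra! hG0
  subst hG0
  exact hG.2 ⟨isLatFilter_Ici x, fun _ hy => hup hx hy⟩ (Set.empty_subset _) Set.self_mem_Ici

lemma IsMaxFilterIn.exists_inf_notMem (hG : IsMaxFilterIn F G) (hup : IsUpset F)
    (hne : G.Nonempty) {a : α} (ha : a ∉ G) : ∃ f ∈ G, f ⊓ a ∉ F := by
  by_contra! h
  have hG' : IsLatFilter {z | ∃ f ∈ G, f ⊓ a ≤ z} := by
    refine ⟨fun z w ⟨f, hf, hz⟩ hzw => ⟨f, hf, hz.trans hzw⟩, ?_⟩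
    rintro z w ⟨f, hf, hz⟩ ⟨g, hg, hw⟩
    refine ⟨f ⊓ g, hG.prop.1.2 f g hf hg, le_inf ?_ ?_⟩
    · exact (inf_le_inf_right a inf_le_left).trans hz
    · exact (inf_le_inf_right a inf_le_right).trans hw
  have hG'F : {z | ∃ f ∈ G, f ⊓ a ≤ z} ⊆ F := fun z ⟨g, hg, hz⟩ => hup (h g hg) hz
  obtain ⟨f, hf⟩ := hne
  exact ha (hG.2 ⟨hG', hG'F⟩ (fun g hg => ⟨g, hg, inf_le_left⟩) ⟨f, hf, inf_le_right⟩)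

end Lattice

section DistribLattice

variable [DistribLattice α] {F G : Set α}

lemma IsPrimeUpset.exists_inf_mem_of_le_sup' (hF : IsPrimeUpset F) {s : Finset ι}
    (hs : s.Nonempty) {g : ι → α} {x : α} (hx : x ∈ F) (hle : x ≤ s.sup' hs g) :
    ∃ i ∈ s, x ⊓ g i ∈ F := by
  refine hF.exists_mem_of_sup'_mem hs ?_
  rwa [← Finset.sup'_inf_distrib_left, inf_eq_left.mpr hle]

lemma IsMaxFilterIn.isPrimeUpset (hG : IsMaxFilterIn F G) (hup : IsUpset F)
    (hpr : IsPrimeUpset F) (hne : G.Nonempty) : IsPrimeUpset G := by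
  intro x y hxy
  by_contra! hxy'
  obtain ⟨f, hf, hfx⟩ := hG.exists_inf_notMem hup hne hxy'.1
  obtain ⟨g, hg, hgy⟩ := hG.exists_inf_notMem hup hne hxy'.2
  have hmem : f ⊓ g ⊓ x ⊔ f ⊓ g ⊓ y ∈ F := by
    rw [← inf_sup_left]
    exact hG.prop.2 (hG.prop.1.2 _ _ (hG.prop.1.2 f g hf hg) hxy)
  rcases hpr _ _ hmem with h | h
  · exact hfx (hup h (inf_le_inf_right x inf_le_left))
  · exact hgy (hup h (inf_le_inf_right y inf_le_right))

lemma IsNFilter.exists_ne_inf_mem {n : ℕ} (hF : IsNFilter n F) (hpr : IsPrimeUpset F)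
    (hn : 1 ≤ n) [Fintype ι] (hcard : n < Fintype.card ι) {a : ι → α} (ha : ∀ i, a i ∈ F) :
    ∃ i j, i ≠ j ∧ a i ⊓ a j ∈ F := by
  classical
  have : Nontrivial ι := Fintype.one_lt_card_iff_nontrivial.mp (by omega)
  have hne (i : ι) : (Finset.univ.erase i).Nonempty :=
    (Finset.erase_nonempty (Finset.mem_univ i)).2 Finset.univ_nontrivial
  set b : ι → α := fun i => (Finset.univ.erase i).sup' (hne i) a
  have hb : Finset.univ.inf' Finset.univ_nonempty b ∈ F := by
    have hY := hF.2 (Finset.univ.image b) (Finset.univ_nonempty.image b) fun X hX hXY hXcard => by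
      obtain ⟨k, hk⟩ := Finset.exists_subset_image_erase_of_card_lt hXY (hXcard.trans_lt hcard)
      refine hF.1 (ha k) (Finset.le_inf' hX id fun x hx => ?_)
      obtain ⟨i, hi, rfl⟩ := Finset.mem_image.mp (hk hx)
      exact Finset.le_sup' a (Finset.mem_erase.mpr ⟨(Finset.ne_of_mem_erase hi).symm,
        Finset.mem_univ k⟩)
    rwa [Finset.inf'_image] at hY
  obtain ⟨i⟩ := (inferInstance : Nonempty ι)
  obtain ⟨j, -, hj⟩ := hpr.exists_inf_mem_of_le_sup' (hne i) hb
    (Finset.inf'_le b (Finset.mem_univ i))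
  obtain ⟨j', hj', hjj'⟩ := hpr.exists_inf_mem_of_le_sup' (hne j) hj
    (inf_le_left.trans (Finset.inf'_le b (Finset.mem_univ j)))
  exact ⟨j, j', (Finset.ne_of_mem_erase hj').symm,
    hF.1 hjj' (le_inf (inf_le_left.trans inf_le_right) inf_le_right)⟩

lemma IsNFilter.not_injective_of_isMaxFilterIn {n : ℕ} (hF : IsNFilter n F)
    (hpr : IsPrimeUpset F) (hn : 1 ≤ n) [Fintype ι] (hcard : n < Fintype.card ι)
    {G : ι → Set α} (hG : ∀ i, IsMaxFilterIn F (G i)) (hne : ∀ i, (G i).Nonempty) :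
    ¬ Function.Injective G := by
  intro hinj
  have hsep (i j : ι) : ∃ p ∈ G i, ∃ q ∈ G j, i ≠ j → p ⊓ q ∉ F := by
    by_cases hij : i = j
    · obtain ⟨p, hp⟩ := hne i
      obtain ⟨q, hq⟩ := hne j
      exact ⟨p, hp, q, hq, absurd hij⟩
    obtain ⟨q, hqj, hqi⟩ : ∃ q ∈ G j, q ∉ G i := Set.not_subset.mp fun hji =>
      hij (hinj (le_antisymm ((hG j).2 (hG i).prop hji) hji))
    obtain ⟨p, hpi, hpq⟩ := (hG i).exists_inf_notMem hF.1 (hne i) hqi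
    exact ⟨p, hpi, q, hqj, fun _ => hpq⟩
  choose p hp q hq hpq using hsep
  set a : ι → α := fun i => Finset.univ.inf' ⟨i, Finset.mem_univ i⟩ fun j => p i j ⊓ q j i
  have ha (i : ι) : a i ∈ G i :=
    (hG i).prop.1.infClosed.finsetInf'_mem _ fun j _ => (hG i).prop.1.2 _ _ (hp i j) (hq j i)
  obtain ⟨i, j, hij, hmem⟩ :=
    hF.exists_ne_inf_mem hpr hn hcard fun i => (hG i).prop.2 (ha i)
  refine hpq i j hij (hF.1 hmem (inf_le_inf ?_ ?_))
  · exact (Finset.inf'_le _ (Finset.mem_univ j)).trans inf_le_left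
  · exact (Finset.inf'_le _ (Finset.mem_univ i)).trans inf_le_right

lemma IsNFilter.exists_isMaxFilterIn_cover {n : ℕ} (hF : IsNFilter n F) (hpr : IsPrimeUpset F)
    (hn : 1 ≤ n) (hne : F.Nonempty) :
    ∃ P : Fin n → Set α, (∀ i, IsMaxFilterIn F (P i)) ∧ F = ⋃ i, P i := by
  obtain ⟨x, hx⟩ := hne
  have : Nonempty {G // IsMaxFilterIn F G} :=
    let ⟨G, hG, _⟩ := exists_isMaxFilterIn_mem hF.1 hx
    ⟨⟨G, hG⟩⟩
  obtain ⟨g, hg⟩ := exists_surjective_fin_of_forall_not_injective (n := n) fun f hf =>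
    hF.not_injective_of_isMaxFilterIn hpr hn (by simp) (fun i => (f i).2)
      (fun i => (f i).2.nonempty hF.1 ⟨x, hx⟩) (Subtype.val_injective.comp hf)
  refine ⟨fun i => g i, fun i => (g i).2,
    Set.Subset.antisymm (fun y hy => ?_) (Set.iUnion_subset fun i => (g i).2.prop.2)⟩
  obtain ⟨G, hG, hyG⟩ := exists_isMaxFilterIn_mem hF.1 hy
  obtain ⟨i, hi⟩ := hg ⟨G, hG⟩
  exact Set.mem_iUnion.mpr ⟨i, by rw [hi]; exact hyG⟩

end DistribLattice

end Filters

section DeMorgan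

variable {L ι : Type*} [DeMorgan L]

lemma DeMorgan.dneg_inf (x y : L) : ∼(x ⊓ y) = ∼x ⊔ ∼y := by
  rw [← DeMorgan.dneg_dneg (∼x ⊔ ∼y), DeMorgan.dneg_sup, DeMorgan.dneg_dneg, DeMorgan.dneg_dneg]

lemma Prod.dneg_bool (p : Bool × Bool) : ∼p = (!p.2, !p.1) := rfl

lemma Pi.dneg_apply (f : ι → Bool × Bool) (i : ι) : (∼f) i = ∼(f i) := rfl

lemma fst_sup_dneg_eq_true :
    ∀ p : Bool × Bool, (p.2 = true → p.1 = true) → (p ⊔ ∼p).1 = true := by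
  decide

lemma isCompleteUpset_iUnion [Nonempty L] [Nonempty ι] {P : ι → Set L}
    (hP : ∀ i, IsLatFilter (P i)) (hexcl : ∀ i y, y ⊔ ∼y ∈ P i) : IsCompleteUpset (⋃ i, P i) := by
  refine ⟨fun x hx y => ?_, ?_⟩
  · obtain ⟨i, hi⟩ := Set.mem_iUnion.mp hx
    exact Set.mem_iUnion_of_mem i ((hP i).2 _ _ hi (hexcl i y))
  · obtain ⟨i⟩ := (inferInstance : Nonempty ι)
    obtain ⟨y⟩ := (inferInstance : Nonempty L)
    exact ⟨_, Set.mem_iUnion_of_mem i (hexcl i y)⟩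

lemma IsMaxFilterIn.sup_dneg_mem {F G : Set L} (hG : IsMaxFilterIn F G) (hup : IsUpset F)
    (hac : AlmostComplete F) (hne : G.Nonempty) (y : L) : y ⊔ ∼y ∈ G := by
  by_contra hy
  obtain ⟨f, hf, hfy⟩ := hG.exists_inf_notMem hup hne hy
  exact hfy (hac f (hG.prop.2 hf) y)

lemma IsDMHom.isLatFilter_coord {h : L → ι → Bool × Bool} (hh : IsDMHom h) (i : ι) :
    IsLatFilter {x | (h x i).1 = true} :=
  isLatFilter_setOf_eq_true fun x y => by rw [hh.1]; rfl

lemma IsDMHom.isPrimeUpset_coord {h : L → ι → Bool × Bool} (hh : IsDMHom h) (i : ι) :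
    IsPrimeUpset {x | (h x i).1 = true} :=
  isPrimeUpset_setOf_eq_true fun x y => by rw [hh.2.1]; rfl

lemma IsDMHom.coord_sup_dneg {h : L → ι → Bool × Bool} (hh : IsDMHom h)
    (hPn : ∀ x i, (h x i).2 = true → (h x i).1 = true) (i : ι) (y : L) :
    (h (y ⊔ ∼y) i).1 = true := by
  rw [hh.2.1, hh.2.2]
  exact fst_sup_dneg_eq_true _ (hPn y i)

open Classical in
noncomputable def primeFilterChar (P : ι → Set L) (x : L) (i : ι) : Bool × Bool :=
  (decide (x ∈ P i), !decide (∼x ∈ P i))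

lemma isDMHom_primeFilterChar {P : ι → Set L} (hP : ∀ i, IsLatFilter (P i))
    (hpr : ∀ i, IsPrimeUpset (P i)) : IsDMHom (primeFilterChar P) := by
  refine ⟨fun x y => ?_, fun x y => ?_, fun x => ?_⟩ <;> funext i <;> ext <;>
    simp only [primeFilterChar, Pi.inf_apply, Pi.sup_apply, Prod.fst_inf, Prod.snd_inf,
      Prod.fst_sup, Prod.snd_sup, Pi.dneg_apply, Prod.dneg_bool] <;>
    rw [Bool.eq_iff_iff] <;>
    simp [(hP _).inf_mem_iff, (hpr _).sup_mem_iff (hP _).1, DeMorgan.dneg_inf,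
      DeMorgan.dneg_sup, DeMorgan.dneg_dneg, imp_iff_not_or]

end DeMorgan

theorem statement4_general {L : Type*} [DeMorgan L] [Nonempty L] (n : ℕ) (hn : 1 ≤ n)
    (F : Set L) :
    (IsCompleteUpset F ∧ IsPrimeUpset F ∧ IsNFilter n F) ↔
      ∃ h : L → (Fin n → Bool × Bool), IsDMHom h ∧
        (∀ (x : L) (i : Fin n), (h x i).2 = true → (h x i).1 = true) ∧
        F = {x : L | ∃ i : Fin n, (h x i).1 = true} := by
  constructor
  · rintro ⟨⟨hac, hne⟩, hpr, hnf⟩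
    obtain ⟨P, hP, hcover⟩ := hnf.exists_isMaxFilterIn_cover hpr hn hne
    have hPne (i : Fin n) : (P i).Nonempty := (hP i).nonempty hnf.1 hne
    have hPpr (i : Fin n) : IsPrimeUpset (P i) := (hP i).isPrimeUpset hnf.1 hpr (hPne i)
    have hexcl (i : Fin n) (y : L) : y ⊔ ∼y ∈ P i := (hP i).sup_dneg_mem hnf.1 hac (hPne i) y
    refine ⟨primeFilterChar P, isDMHom_primeFilterChar (fun i => (hP i).prop.1) hPpr,
      fun x i => ?_, ?_⟩
    · simpa [primeFilterChar, or_iff_not_imp_right] using hPpr i x (∼x) (hexcl i x)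
    · simp [hcover, primeFilterChar, Set.ofPred_exists]
  · rintro ⟨h, hh, hPn, rfl⟩
    have : Nonempty (Fin n) := ⟨⟨0, hn⟩⟩
    rw [Set.ofPred_exists]
    exact ⟨isCompleteUpset_iUnion hh.isLatFilter_coord (hh.coord_sup_dneg hPn),
      isPrimeUpset_iUnion hh.isPrimeUpset_coord, isNFilter_iUnion (by simp) hh.isLatFilter_coord⟩

/-- complete prime `n`-filters are precisely the preimages of the designated
set of `DMₙ` under De Morgan homomorphisms landing in the subalgebra `Pₙ`. -/
theorem statement4 {L : Type*} [DeMorgan L] [Nonempty L] (n : ℕ) (hn : 1 ≤ n)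
    (F : Set L) (hF : IsUpset F) :
    (IsCompleteUpset F ∧ IsPrimeUpset F ∧ IsNFilter n F) ↔
      ∃ h : L → (Fin n → Bool × Bool), IsDMHom h ∧
        (∀ (x : L) (i : Fin n), (h x i).2 = true → (h x i).1 = true) ∧
        F = {x : L | ∃ i : Fin n, (h x i).1 = true} :=
  statement4_general n hn F
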